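/- arXiv:1910.02415 — 2 statements merged into one kernel-verified Lean document; each statement's English description precedes it below -/
import Mathlib

section
/- For every connected unicyclic graph G on n ≥ 3 vertices, M_1(G) ≤ M_1(U_n^3) = n^2 - n + 6, with equality if and only if G ≅ U_n^3. -/
open scoped Classical
noncomputable def M1 {V : Type*} [Fintype V] (G : SimpleGraph V) : ℕ :=
  ∑ v, G.degree v ^ 2
noncomputable def M2 {V : Type*} [Fintype V] (G : SimpleGraph V) : ℕ :=
  ∑ e ∈ G.edgeFinset,
    Sym2.lift ⟨fun u v => G.degree u * G.degree v, fun _ _ => Nat.mul_comm _ _⟩ e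
noncomputable def numEdges {V : Type*} [Fintype V] (G : SimpleGraph V) : ℕ :=
  G.edgeFinset.card
def IsKCyclic {V : Type*} [Fintype V] (k : ℕ) (G : SimpleGraph V) : Prop :=
  G.Connected ∧ G.edgeFinset.card + 1 = Fintype.card V + k
def starGraph (n : ℕ) : SimpleGraph (Fin n) :=
  { Adj := fun u v => u ≠ v ∧ (u.val = 0 ∨ v.val = 0)
    symm := ⟨by intro u v h; exact ⟨h.1.symm, h.2.symm⟩⟩
    loopless := ⟨by intro u h; exact h.1 rfl⟩ }
def joinG {α β : Type*} (G : SimpleGraph α) (H : SimpleGraph β) : SimpleGraph (α ⊕ β) :=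
  { Adj := fun u v =>
      match u, v with
      | Sum.inl a, Sum.inl b => G.Adj a b
      | Sum.inr a, Sum.inr b => H.Adj a b
      | Sum.inl _, Sum.inr _ => True
      | Sum.inr _, Sum.inl _ => True
    symm := ⟨by
      intro u v h
      cases u <;> cases v <;> simp_all [SimpleGraph.adj_comm]⟩
    loopless := ⟨by
      intro u h
      cases u <;> simp_all⟩ }
noncomputable def deleteS {V : Type*} [Fintype V] (G : SimpleGraph V) (S : Finset V) :
    SimpleGraph ↥((↑S : Set V)ᶜ) :=
  G.induce ((↑S : Set V)ᶜ)
def QuasiKCyclic {V : Type*} [Fintype V] (k p : ℕ) (G : SimpleGraph V) : Prop :=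
  G.Connected ∧
  (∃ S : Finset V, S.card = p ∧ IsKCyclic k (deleteS G S)) ∧
  ∀ S' : Finset V, IsKCyclic k (deleteS G S') → p ≤ S'.card
def Un3 (n : ℕ) : SimpleGraph (Fin n) :=
  { Adj := fun u v => u ≠ v ∧ (u.val = 0 ∨ v.val = 0 ∨ (u.val ≤ 2 ∧ v.val ≤ 2))
    symm := ⟨by intro u v h; tauto⟩
    loopless := ⟨by intro u h; exact h.1 rfl⟩ }
def Bn33 (n : ℕ) : SimpleGraph (Fin n) :=
  { Adj := fun u v => u ≠ v ∧ (u.val = 0 ∨ v.val = 0 ∨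
      (1 ≤ u.val ∧ u.val ≤ 2 ∧ 1 ≤ v.val ∧ v.val ≤ 2) ∨
      (3 ≤ u.val ∧ u.val ≤ 4 ∧ 3 ≤ v.val ∧ v.val ≤ 4))
    symm := ⟨by intro u v h; tauto⟩
    loopless := ⟨by intro u h; exact h.1 rfl⟩ }

/-! Let `u` be a vertex of maximum degree `Δ`. If `Δ = n - 1`, exactly one edge avoids `u`, so `G`
is the star at `u` plus one edge, which is `U_n^3`. Otherwise `Δ ≤ n - 2`. If moreover `Δ ≤ 2`,
then `M1 G ≤ 2 Δ n < n² - n + 6`. If `Δ ≥ 3`, the `b = n - Δ` edges avoiding `u` bound every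
other degree `d` by `b + 1`, and summing `(d - 1) (b + 1 - d) ≥ 0` over these vertices, whose
degrees add up to `2n - Δ`, gives `M1 G ≤ n² - n + 6 - (b - 1) (2Δ - 5)`. -/

open Finset

lemma injective_vecCons_three {α : Type*} {a b c : α} (hab : a ≠ b) (hac : a ≠ c)
    (hbc : b ≠ c) : Function.Injective ![a, b, c] := by
  intro i j h
  fin_cases i <;> fin_cases j <;> simp_all [eq_comm]

lemma Finset.sum_sq_add_mul_card_le {ι : Type*} (s : Finset ι) (d : ι → ℕ) {c : ℕ}
    (hd : ∀ i ∈ s, 1 ≤ d i ∧ d i ≤ c) :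
    ∑ i ∈ s, d i ^ 2 + c * #s ≤ (c + 1) * ∑ i ∈ s, d i := by
  rw [mul_comm, ← smul_eq_mul, ← sum_const, ← sum_add_distrib, mul_sum]
  refine sum_le_sum fun i hi => ?_
  obtain ⟨h1, hc⟩ := hd i hi
  -- `(d i - 1) * (c - d i) ≥ 0`
  nlinarith

namespace SimpleGraph

variable {V W : Type*}

lemma Iso.M1_eq [Fintype V] [Fintype W] {G : SimpleGraph V} {H : SimpleGraph W} (f : G ≃g H) :
    M1 G = M1 H :=
  Fintype.sum_equiv f.toEquiv _ _ fun v => by simp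

section Finite

variable [Fintype V] (G : SimpleGraph V)

lemma M1_le_maxDegree_mul : M1 G ≤ G.maxDegree * (2 * #G.edgeFinset) := by
  rw [← sum_degrees_eq_twice_card_edges, mul_sum, M1]
  exact sum_le_sum fun v _ => by
    rw [sq]; exact Nat.mul_le_mul_right _ (G.degree_le_maxDegree v)

lemma degree_le_card_edgeFinset_deleteIncidenceSet_add_one {u v : V} (hvu : v ≠ u) :
    G.degree v ≤ #(G.deleteIncidenceSet u).edgeFinset + 1 := by
  have hsub : G.neighborFinset v ⊆ insert u ((G.deleteIncidenceSet u).neighborFinset v) := by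
    intro w hw
    rw [mem_neighborFinset] at hw
    by_cases hwu : w = u
    · exact hwu ▸ mem_insert_self _ _
    · exact mem_insert_of_mem <| (mem_neighborFinset _ _ _).2 <|
        deleteIncidenceSet_adj.2 ⟨hw, hvu, hwu⟩
  calc G.degree v ≤ #((G.deleteIncidenceSet u).neighborFinset v) + 1 :=
        (card_le_card hsub).trans (card_insert_le _ _)
    _ ≤ #(G.deleteIncidenceSet u).edgeFinset + 1 := by
        gcongr; exact (G.deleteIncidenceSet u).degree_le_card_edgeFinset v

end Finite

def starAddEdge (u x y : V) : SimpleGraph V where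
  Adj a b := a ≠ b ∧ (a = u ∨ b = u ∨ s(a, b) = s(x, y))
  symm := ⟨fun a b ⟨hab, h⟩ => ⟨hab.symm, by rw [Sym2.eq_swap]; tauto⟩⟩
  loopless := ⟨fun _ h => h.1 rfl⟩

def Iso.starAddEdge (φ : V ≃ W) (u x y : V) :
    starAddEdge u x y ≃g starAddEdge (φ u) (φ x) (φ y) :=
  ⟨φ, by simp [SimpleGraph.starAddEdge, φ.injective.eq_iff]⟩

lemma eq_starAddEdge [Fintype V] {G : SimpleGraph V} {u x y : V} (hu : G.IsUniversal u)
    (hxy : (G.deleteIncidenceSet u).edgeFinset = {s(x, y)}) : G = starAddEdge u x y := by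
  ext a b
  have hrest : (G.deleteIncidenceSet u).Adj a b ↔ s(a, b) = s(x, y) := by
    rw [← mem_edgeSet, ← mem_edgeFinset, hxy, mem_singleton]
  refine ⟨fun h => ⟨h.ne, ?_⟩, fun ⟨hab, h⟩ => ?_⟩
  · by_cases ha : a = u
    · exact .inl ha
    by_cases hb : b = u
    · exact .inr (.inl hb)
    exact .inr (.inr (hrest.1 (deleteIncidenceSet_adj.2 ⟨h, ha, hb⟩)))
  · rcases h with rfl | rfl | h
    · exact hu hab
    · exact (hu hab.symm).symm
    · exact (deleteIncidenceSet_adj.1 (hrest.2 h)).1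

lemma Un3_adj {n : ℕ} {a b : Fin n} :
    (Un3 n).Adj a b ↔ a.val ≠ b.val ∧ (a.val = 0 ∨ b.val = 0 ∨ (a.val ≤ 2 ∧ b.val ≤ 2)) := by
  rw [Fin.val_ne_iff]; rfl

lemma Un3_eq_starAddEdge {n : ℕ} (hn : 3 ≤ n) :
    Un3 n = starAddEdge ⟨0, by omega⟩ ⟨1, by omega⟩ ⟨2, by omega⟩ := by
  ext a b
  simp only [Un3_adj, starAddEdge, Sym2.eq_iff, Fin.ext_iff, ne_eq]
  omega

lemma degree_Un3 {n : ℕ} (hn : 3 ≤ n) (v : Fin n) :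
    (Un3 n).degree v = if v.val = 0 then n - 1 else if v.val ≤ 2 then 2 else 1 := by
  rw [← card_neighborFinset_eq_degree]
  split_ifs with h0 h2
  · have : (Un3 n).neighborFinset v = univ.erase v := by
      ext w
      simp only [mem_neighborFinset, Un3_adj, mem_erase, mem_univ, and_true]
      omega
    rw [this, card_erase_of_mem (mem_univ v), card_univ, Fintype.card_fin]
  · have : (Un3 n).neighborFinset v =
        ({⟨0, by omega⟩, ⟨1, by omega⟩, ⟨2, by omega⟩} : Finset (Fin n)).erase v := by
      ext w
      simp only [mem_neighborFinset, Un3_adj, mem_erase, mem_insert, mem_singleton, Fin.ext_iff]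
      omega
    rw [this, card_erase_of_mem (by simp [Fin.ext_iff]; omega),
      card_insert_of_notMem (by simp [Fin.ext_iff]), card_pair (by simp [Fin.ext_iff])]
  · have : (Un3 n).neighborFinset v = {⟨0, by omega⟩} := by
      ext w
      simp only [mem_neighborFinset, Un3_adj, mem_singleton, Fin.ext_iff]
      omega
    rw [this, card_singleton]

lemma M1_Un3 {n : ℕ} (hn : 3 ≤ n) : M1 (Un3 n) = n ^ 2 - n + 6 := by
  obtain ⟨m, rfl⟩ : ∃ m, n = m + 3 := ⟨n - 3, by omega⟩
  have hsum : (m + 3) ^ 2 - (m + 3) + 6 = (m + 2) ^ 2 + (2 ^ 2 + (2 ^ 2 + m)) := by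
    have : (m + 3) ^ 2 = (m + 2) ^ 2 + 2 * m + 5 := by ring
    omega
  rw [hsum, M1]
  simp only [degree_Un3 hn]
  simp [Fin.sum_univ_succ]

variable [Fintype V] {G : SimpleGraph V} {n : ℕ}

lemma nonempty_iso_Un3_of_isUniversal (hcard : Fintype.card V = n) (hE : #G.edgeFinset = n)
    {u : V} (hu : G.IsUniversal u) : Nonempty (G ≃g Un3 n) := by
  have hdeg : G.degree u = n - 1 := hcard ▸ (G.degree_eq_card_sub_one u).2 hu
  have hone : #(G.deleteIncidenceSet u).edgeFinset = 1 := by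
    have := Fintype.card_pos_iff.2 ⟨u⟩
    rw [card_edgeFinset_deleteIncidenceSet, hE, hdeg]
    omega
  obtain ⟨⟨x, y⟩, hxy⟩ := card_eq_one.1 hone
  have hxy_adj : (G.deleteIncidenceSet u).Adj x y := by
    rw [← mem_edgeSet, ← mem_edgeFinset, hxy]
    exact mem_singleton_self _
  obtain ⟨hadj, hxu, hyu⟩ := deleteIncidenceSet_adj.1 hxy_adj
  have hinj : Function.Injective ![u, x, y] := injective_vecCons_three hxu.symm hyu.symm hadj.ne
  have hn : 3 ≤ n := hcard ▸ by simpa using Fintype.card_le_of_injective _ hinj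
  let e := Fintype.equivFinOfCardEq hcard
  obtain ⟨σ, hσ⟩ := Equiv.Perm.exists_extending_pair (e ∘ ![u, x, y])
    ![⟨0, by omega⟩, ⟨1, by omega⟩, ⟨2, by omega⟩] (e.injective.comp hinj)
    (injective_vecCons_three (by simp) (by simp) (by simp))
  rw [eq_starAddEdge hu hxy, Un3_eq_starAddEdge hn]
  refine ⟨?_⟩
  convert Iso.starAddEdge (e.trans σ) u x y using 2
  exacts [(hσ 0).symm, (hσ 1).symm, (hσ 2).symm]

lemma M1_lt_of_three_le_degree (hconn : G.Connected) (hcard : Fintype.card V = n)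
    (hE : #G.edgeFinset = n) {u : V} (hu3 : 3 ≤ G.degree u) (hun : G.degree u + 2 ≤ n) :
    M1 G < n ^ 2 - n + 6 := by
  obtain ⟨b, hb⟩ : ∃ b, n = G.degree u + b := ⟨n - G.degree u, by omega⟩
  have : Nontrivial V := Fintype.one_lt_card_iff_nontrivial.1 (by omega)
  have hdeg : ∀ v ∈ univ.erase u, 1 ≤ G.degree v ∧ G.degree v ≤ b + 1 := fun v hv =>
    ⟨hconn.preconnected.degree_pos_of_nontrivial v, by
      have := G.degree_le_card_edgeFinset_deleteIncidenceSet_add_one (ne_of_mem_erase hv)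
      rwa [card_edgeFinset_deleteIncidenceSet, hE, hb, Nat.add_sub_cancel_left] at this⟩
  have hsum : G.degree u + ∑ v ∈ univ.erase u, G.degree v = 2 * n := by
    rw [add_sum_erase _ (fun v => G.degree v) (mem_univ u), sum_degrees_eq_twice_card_edges, hE]
  have hM1 : M1 G = G.degree u ^ 2 + ∑ v ∈ univ.erase u, G.degree v ^ 2 :=
    (add_sum_erase _ (fun v => G.degree v ^ 2) (mem_univ u)).symm
  have hsq := sum_sq_add_mul_card_le _ _ hdeg
  rw [card_erase_of_mem (mem_univ u), card_univ, hcard] at hsq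
  suffices M1 G + n < n ^ 2 + 6 by have := Nat.le_self_pow two_ne_zero n; omega
  subst hb
  zify [show 1 ≤ G.degree u + b by omega] at hsq hsum hM1 ⊢
  nlinarith [mul_pos (show (0 : ℤ) < b - 1 by omega) (show (0 : ℤ) < 2 * G.degree u - 5 by omega)]

lemma nonempty_iso_Un3_or_M1_lt (hcard : Fintype.card V = n) (hconn : G.Connected)
    (hE : #G.edgeFinset = n) : Nonempty (G ≃g Un3 n) ∨ M1 G < n ^ 2 - n + 6 := by
  have := hconn.nonempty
  obtain ⟨u, hu⟩ := G.exists_maximal_degree_vertex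
  by_cases huniv : G.IsUniversal u
  · exact .inl (nonempty_iso_Un3_of_isUniversal hcard hE huniv)
  right
  have hΔ : G.maxDegree + 2 ≤ n := by
    have := (G.degree_lt_card_sub_one u).2 huniv
    omega
  by_cases h3 : 3 ≤ G.maxDegree
  · exact M1_lt_of_three_le_degree hconn hcard hE (hu ▸ h3) (hu ▸ hΔ)
  calc M1 G ≤ G.maxDegree * (2 * n) := hE ▸ G.M1_le_maxDegree_mul
    _ < n ^ 2 - n + 6 := by
      have := Nat.le_self_pow two_ne_zero n
      interval_cases G.maxDegree <;> zify [this] at * <;> nlinarith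

end SimpleGraph

open SimpleGraph

theorem stmt5 {V : Type*} [Fintype V] {n : ℕ} (hn : 3 ≤ n) (hcard : Fintype.card V = n)
    (G : SimpleGraph V) (hconn : G.Connected) (huni : G.edgeFinset.card = n) :
    M1 G ≤ M1 (Un3 n) ∧ M1 (Un3 n) = n ^ 2 - n + 6 ∧
      (M1 G = M1 (Un3 n) ↔ Nonempty (G ≃g Un3 n)) := by
  have hUn3 := M1_Un3 hn
  have key := nonempty_iso_Un3_or_M1_lt hcard hconn huni
  refine ⟨?_, hUn3, fun heq => key.resolve_right (by omega), fun h => h.some.M1_eq⟩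
  rcases key with hiso | hlt
  · exact hiso.some.M1_eq.le
  · omega
end

section
/- For n ≥ p + 3, the graph U_{n−p}^3 + K_p has the maximum first Zagreb index M_1 among all p-quasi unicyclic graphs on n vertices (connected graphs G where some p-set S has G − S unicyclic, and p is minimal with this property). -/
open scoped Classical
/-!
Deleting `S` (with `|S| = p`) lowers the degree of every other vertex by at most `p`, and every
vertex of `S` has degree at most `n - 1`, so `M₁(G) ≤ ∑_{v ∉ S} (d_H(v) + p)² + p (n - 1)²` where
`H = G - S` is connected unicyclic on `m = n - p` vertices. As `∑ d_H = 2m` is fixed, it remains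
to maximise `∑ d_H²`. With `e = d_H - 1 ≥ 0` we have `∑ e = m`, `e ≤ m - 2`, and
`e(u) + e(v) ≤ m - 1` because at most one edge joins two vertices; this forces
`∑ e² ≤ (m - 2)² + 2`, the value attained by `U_m^3`. The join `U_m^3 + K_p` attains every bound.
-/

open Finset

namespace SimpleGraph

variable {V : Type*} [Fintype V] [DecidableEq V] (G : SimpleGraph V) [DecidableRel G.Adj]

-- Only the edge `s(u, v)` can be incident to both `u` and `v`.
lemma degree_add_degree_le_card_edgeFinset_add_one {u v : V} (huv : u ≠ v) :
    G.degree u + G.degree v ≤ #G.edgeFinset + 1 := by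
  have hunion : G.incidenceFinset u ∪ G.incidenceFinset v ⊆ G.edgeFinset :=
    union_subset (G.incidenceFinset_subset u) (G.incidenceFinset_subset v)
  have hinter : G.incidenceFinset u ∩ G.incidenceFinset v ⊆ {s(u, v)} := by
    intro e he
    simp only [mem_inter, mem_incidenceFinset, incidenceSet, Set.mem_ofPred_eq] at he
    exact mem_singleton.mpr ((Sym2.mem_and_mem_iff huv).mp ⟨he.1.2, he.2.2⟩)
  have := card_union_add_card_inter (G.incidenceFinset u) (G.incidenceFinset v)
  rw [card_incidenceFinset_eq_degree, card_incidenceFinset_eq_degree] at this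
  have := card_le_card hunion
  have := (card_le_card hinter).trans_eq (card_singleton _)
  omega

end SimpleGraph

lemma sq_add_mul_le {k a b c : ℕ} (ha : 1 ≤ a) (hak : a ≤ k + 1) (hba : b ≤ a)
    (hab : a + b ≤ k + 2) (hac : a + c = k + 3) : a ^ 2 + b * c ≤ (k + 1) ^ 2 + 2 := by
  obtain rfl | ha2 := ha.eq_or_lt
  · nlinarith
  · nlinarith

lemma sum_sq_le_of_pairwise_add_le {ι : Type*} [Fintype ι] (e : ι → ℕ) {k : ℕ}
    (hsum : ∑ i, e i = k + 3) (hle : ∀ i, e i ≤ k + 1)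
    (hpair : ∀ i j, i ≠ j → e i + e j ≤ k + 2) :
    ∑ i, e i ^ 2 ≤ (k + 1) ^ 2 + 2 := by
  classical
  have hne : (univ : Finset ι).Nonempty := nonempty_of_sum_ne_zero (f := e) (by omega)
  obtain ⟨u, -, hu⟩ := exists_max_image univ e hne
  have hpos : 1 ≤ e u := by
    by_contra! h
    have : ∑ i, e i = 0 := sum_eq_zero fun i _ => by have := hu i (mem_univ i); omega
    omega
  have hb : ∀ i ∈ univ.erase u, e i ≤ min (e u) (k + 2 - e u) := fun i hi =>
    le_min (hu i (mem_univ i)) (by have := hpair u i (ne_of_mem_erase hi).symm; omega)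
  have hrest : ∑ i ∈ univ.erase u, e i ^ 2
      ≤ min (e u) (k + 2 - e u) * ∑ i ∈ univ.erase u, e i := by
    rw [mul_sum]
    exact sum_le_sum fun i hi => by rw [sq]; exact Nat.mul_le_mul_right _ (hb i hi)
  rw [← add_sum_erase univ e (mem_univ u)] at hsum
  rw [← add_sum_erase univ _ (mem_univ u)]
  have := sq_add_mul_le hpos (hle u) (min_le_left _ _)
    (by have := hle u; omega : e u + min (e u) (k + 2 - e u) ≤ k + 2) hsum
  omega

lemma sum_degree_add_sq {V : Type*} [Fintype V] (H : SimpleGraph V) (p : ℕ) :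
    ∑ v, (H.degree v + p) ^ 2 = M1 H + 4 * p * #H.edgeFinset + Fintype.card V * p ^ 2 := by
  have := H.sum_degrees_eq_twice_card_edges
  simp only [add_sq, sum_add_distrib, ← sum_mul, ← mul_sum, this, sum_const, card_univ,
    smul_eq_mul, M1]
  ring

lemma degree_le_degree_deleteS_add_card {V : Type*} [Fintype V] [DecidableEq V]
    (G : SimpleGraph V) (S : Finset V) (v : ↥((↑S : Set V)ᶜ)) :
    G.degree v ≤ (deleteS G S).degree v + #S := by
  have hsub : G.neighborFinset v
      ⊆ ((deleteS G S).neighborFinset v).map (.subtype (· ∈ (↑S : Set V)ᶜ)) ∪ S := by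
    intro w hw
    by_cases hwS : w ∈ S
    · exact mem_union_right _ hwS
    · refine mem_union_left _ (mem_map.mpr ⟨⟨w, hwS⟩, ?_, rfl⟩)
      rw [SimpleGraph.mem_neighborFinset] at hw ⊢
      exact hw
  rw [← SimpleGraph.card_neighborFinset_eq_degree, ← SimpleGraph.card_neighborFinset_eq_degree]
  exact (card_le_card hsub).trans ((card_union_le _ _).trans_eq (by rw [card_map]))

lemma M1_le_sum_deleteS {V : Type*} [Fintype V] [DecidableEq V] (G : SimpleGraph V)
    (S : Finset V) :
    M1 G ≤ ∑ v, ((deleteS G S).degree v + #S) ^ 2 + #S * (Fintype.card V - 1) ^ 2 := by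
  have hS : ∑ v ∈ S, G.degree v ^ 2 ≤ #S * (Fintype.card V - 1) ^ 2 := by
    rw [← smul_eq_mul, ← sum_const]
    exact sum_le_sum fun v _ =>
      Nat.pow_le_pow_left (Nat.le_sub_one_of_lt (G.degree_lt_card_verts v)) 2
  have hSc : ∑ v ∈ Sᶜ, G.degree v ^ 2 ≤ ∑ v, ((deleteS G S).degree v + #S) ^ 2 := by
    rw [sum_subtype Sᶜ (p := (· ∈ (↑S : Set V)ᶜ)) (by simp)]
    exact sum_le_sum fun v _ => Nat.pow_le_pow_left (degree_le_degree_deleteS_add_card G S v) 2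
  rw [M1, ← sum_add_sum_compl S]
  omega

lemma joinG_degree_inl {α β : Type*} [Fintype α] [Fintype β] (G : SimpleGraph α)
    (H : SimpleGraph β) (a : α) :
    (joinG G H).degree (Sum.inl a) = G.degree a + Fintype.card β := by
  have : (joinG G H).neighborFinset (Sum.inl a) = (G.neighborFinset a).disjSum univ := by
    ext (x | x) <;> rw [SimpleGraph.mem_neighborFinset] <;> simp [joinG]
  rw [← SimpleGraph.card_neighborFinset_eq_degree, this, card_disjSum,
    SimpleGraph.card_neighborFinset_eq_degree, card_univ]

lemma joinG_degree_inr {α β : Type*} [Fintype α] [Fintype β] (G : SimpleGraph α)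
    (H : SimpleGraph β) (b : β) :
    (joinG G H).degree (Sum.inr b) = H.degree b + Fintype.card α := by
  have : (joinG G H).neighborFinset (Sum.inr b) = univ.disjSum (H.neighborFinset b) := by
    ext (x | x) <;> rw [SimpleGraph.mem_neighborFinset] <;> simp [joinG]
  rw [← SimpleGraph.card_neighborFinset_eq_degree, this, card_disjSum,
    SimpleGraph.card_neighborFinset_eq_degree, card_univ, add_comm]

lemma M1_joinG {α β : Type*} [Fintype α] [Fintype β] (G : SimpleGraph α) (H : SimpleGraph β) :
    M1 (joinG G H) = ∑ a, (G.degree a + Fintype.card β) ^ 2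
      + ∑ b, (H.degree b + Fintype.card α) ^ 2 := by
  simp only [M1, Fintype.sum_sum_type, joinG_degree_inl, joinG_degree_inr]

lemma Un3_degree (k : ℕ) (a : Fin (k + 3)) :
    (Un3 (k + 3)).degree a = if a.val = 0 then k + 2 else if a.val ≤ 2 then 2 else 1 := by
  rw [← SimpleGraph.card_neighborFinset_eq_degree]
  split_ifs with h0 h2
  · have : (Un3 (k + 3)).neighborFinset a = univ.erase a := by
      ext w
      rw [SimpleGraph.mem_neighborFinset]
      simp only [Un3, mem_erase, mem_univ, ne_eq, Fin.ext_iff, and_true]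
      omega
    simp [this]
  · have : (Un3 (k + 3)).neighborFinset a = {0, ⟨3 - a.val, by omega⟩} := by
      ext w
      rw [SimpleGraph.mem_neighborFinset]
      simp only [Un3, mem_insert, mem_singleton, ne_eq, Fin.ext_iff, Fin.val_zero]
      omega
    rw [this, card_pair (by simp [Fin.ext_iff]; omega)]
  · have : (Un3 (k + 3)).neighborFinset a = {0} := by
      ext w
      rw [SimpleGraph.mem_neighborFinset]
      simp only [Un3, mem_singleton, ne_eq, Fin.ext_iff, Fin.val_zero]
      omega
    rw [this, card_singleton]

lemma sum_Un3_degree (k : ℕ) (f : ℕ → ℕ) :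
    ∑ a, f ((Un3 (k + 3)).degree a) = f (k + 2) + 2 * f 2 + k * f 1 := by
  simp only [Fin.sum_univ_succ, Un3_degree, Fin.val_zero, Fin.val_succ,
    Nat.reduceEqDiff, Nat.reduceLeDiff, ↓reduceIte, sum_const, card_univ, Fintype.card_fin,
    smul_eq_mul]
  ring

lemma M1_Un3 (k : ℕ) : M1 (Un3 (k + 3)) = (k + 2) ^ 2 + 2 * 2 ^ 2 + k := by
  rw [M1, sum_Un3_degree k (· ^ 2)]
  ring

lemma card_edgeFinset_Un3 (k : ℕ) : #(Un3 (k + 3)).edgeFinset = k + 3 := by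
  have := (Un3 (k + 3)).sum_degrees_eq_twice_card_edges
  have hsum := sum_Un3_degree k id
  simp only [id] at hsum
  omega

lemma M1_le_M1_Un3_of_isKCyclic_one {V : Type*} [Fintype V] {H : SimpleGraph V} {k : ℕ}
    (hH : IsKCyclic 1 H) (hcard : Fintype.card V = k + 3) :
    M1 H ≤ M1 (Un3 (k + 3)) := by
  obtain ⟨hconn, hedges⟩ := hH
  have : Nontrivial V := Fintype.one_lt_card_iff_nontrivial.mp (by omega)
  have hpos : ∀ v, 1 ≤ H.degree v := fun v => hconn.preconnected.degree_pos_of_nontrivial v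
  have hsum : ∑ v, (H.degree v - 1) = k + 3 := by
    have := H.sum_degrees_eq_twice_card_edges
    have h1 : ∑ v, (H.degree v - 1) + ∑ _v : V, 1 = ∑ v, H.degree v := by
      rw [← sum_add_distrib]; exact sum_congr rfl fun v _ => Nat.sub_add_cancel (hpos v)
    simp only [sum_const, card_univ, smul_eq_mul, mul_one] at h1
    omega
  have hsq : ∑ v, (H.degree v - 1) ^ 2 ≤ (k + 1) ^ 2 + 2 := by
    refine sum_sq_le_of_pairwise_add_le _ hsum (fun v => ?_) (fun u v huv => ?_)
    · have := H.degree_lt_card_verts v; omega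
    · have := H.degree_add_degree_le_card_edgeFinset_add_one huv
      have := hpos u; have := hpos v; omega
  have hM1 : M1 H = ∑ v, (H.degree v - 1) ^ 2 + 2 * ∑ v, (H.degree v - 1) + Fintype.card V := by
    rw [M1, mul_sum, ← card_univ, card_eq_sum_ones, ← sum_add_distrib, ← sum_add_distrib]
    refine sum_congr rfl fun v _ => ?_
    obtain ⟨d, hd⟩ := Nat.exists_eq_add_of_le' (hpos v)
    rw [hd, Nat.add_sub_cancel]; ring
  rw [hM1, hsum, hcard, M1_Un3]
  nlinarith

lemma sum_degree_add_sq_le_of_isKCyclic_one {V : Type*} [Fintype V] {H : SimpleGraph V} {k : ℕ}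
    (hH : IsKCyclic 1 H) (hcard : Fintype.card V = k + 3) (p : ℕ) :
    ∑ v, (H.degree v + p) ^ 2 ≤ ∑ a, ((Un3 (k + 3)).degree a + p) ^ 2 := by
  have hedges : #H.edgeFinset = k + 3 := by have := hH.2; omega
  rw [sum_degree_add_sq, sum_degree_add_sq, hedges, card_edgeFinset_Un3, hcard, Fintype.card_fin]
  gcongr
  exact M1_le_M1_Un3_of_isKCyclic_one hH hcard

lemma M1_joinG_completeGraph {α : Type*} [Fintype α] (G : SimpleGraph α) (p : ℕ) :
    M1 (joinG G (SimpleGraph.completeGraph (Fin p)))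
      = ∑ a, (G.degree a + p) ^ 2 + p * (Fintype.card α + p - 1) ^ 2 := by
  have hK : ∑ b : Fin p, ((SimpleGraph.completeGraph (Fin p)).degree b + Fintype.card α) ^ 2
      = p * (Fintype.card α + p - 1) ^ 2 := by
    simp only [SimpleGraph.complete_graph_degree, Fintype.card_fin, sum_const, card_univ,
      smul_eq_mul]
    obtain rfl | hp := Nat.eq_zero_or_pos p
    · simp
    · rw [show p - 1 + Fintype.card α = Fintype.card α + p - 1 by omega]
  rw [M1_joinG, Fintype.card_fin]
  congr 1
  -- `hK` uses the `Top` decidability instance for adjacency in `completeGraph`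
  convert hK

theorem stmt13 {n p : ℕ} (hn : p + 3 ≤ n) (G : SimpleGraph (Fin n))
    (hG : QuasiKCyclic 1 p G) :
    M1 G ≤ M1 (joinG (Un3 (n - p)) (SimpleGraph.completeGraph (Fin p))) := by
  obtain ⟨-, ⟨S, rfl, hH⟩, -⟩ := hG
  obtain ⟨k, hk⟩ : ∃ k, n - #S = k + 3 := ⟨n - #S - 3, by omega⟩
  -- `QuasiKCyclic` carries the classical `DecidableEq` instance; switch to the one of `Fin n`.
  replace hH : IsKCyclic 1 (deleteS G S) := by convert hH
  have hcard : Fintype.card ↥((↑S : Set (Fin n))ᶜ) = k + 3 := by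
    simp only [Fintype.card_compl_set, Finset.coe_sort_coe, Fintype.card_coe, Fintype.card_fin]
    omega
  rw [hk, M1_joinG_completeGraph, Fintype.card_fin, show k + 3 + #S - 1 = n - 1 by omega]
  calc M1 G ≤ ∑ v, ((deleteS G S).degree v + #S) ^ 2 + #S * (n - 1) ^ 2 := by
        simpa using M1_le_sum_deleteS G S
    _ ≤ _ := by
        gcongr
        exact sum_degree_add_sq_le_of_isKCyclic_one hH hcard #S
end
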